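/- arXiv:1209.6179 — 4 statements merged into one kernel-verified Lean document; each statement's English description precedes it below -/
import Mathlib

section
/- Let S be a left-cancellative semigroup. Then the following conditions are equivalent: (a) S is left-amenable, i.e. there exists a finitely additive left-invariant probability measure defined on all subsets of S; (b) for every finite subset K of S and every real number ε > 0, there exists a nonempty finite subset F of S such that α(F, K) ≤ ε. -/
/-- A semigroup `S` is left-amenable if there is a finitely additive left-invariant
probability measure `μ` defined on all subsets of `S`. -/
def LeftAmenable (S : Type*) [Mul S] : Prop :=
  ∃ μ : Set S → ℝ,
    (∀ A : Set S, 0 ≤ μ A ∧ μ A ≤ 1) ∧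
    (∀ A B : Set S, Disjoint A B → μ (A ∪ B) = μ A + μ B) ∧
    μ Set.univ = 1 ∧
    (∀ (s : S) (A : Set S), μ ((s * ·) ⁻¹' A) = μ A)

/-- The right `K`-boundary of a finite subset `A` of a semigroup:
`∂_K(A) = A \ int_K(A) = {s ∈ A : ¬(Ks ⊆ A)}`. -/
def finBoundary {S : Type*} [Mul S] [DecidableEq S] (K A : Finset S) : Finset S :=
  A.filter fun s => ¬ ∀ k ∈ K, k * s ∈ A

/-- The amenability constant of `A` with respect to `K`: `α(A, K) = |∂_K(A)| / |A|`. -/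
noncomputable def amenConst {S : Type*} [Mul S] [DecidableEq S] (A K : Finset S) : ℝ :=
  ((finBoundary K A).card : ℝ) / (A.card : ℝ)

/-!
(a) ⇒ (b): if some `K` and `ε > 0` admit no such `F`, then `|∂_K(F)| ≥ ε |F|` for every finite
`F`, hence `|K F \ F| ≥ ε |F| / |K|` and `K F ∪ F` is larger than `F` by a fixed factor.
Iterating gives a finite `T` with `|T F ∪ F| ≥ 2 |F|` for all `F`, and Hall's marriage theorem
then yields an injection of two disjoint copies of `S` into `S` that moves each point by left
multiplication by an element of `T`, or not at all. An invariant mean would give its image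
measure `2`.

(b) ⇒ (a): along an ultrafilter on finite sets that eventually has arbitrarily small amenability
constant for every `K`, the relative densities `|F ∩ A| / |F|` converge to a finitely additive
probability measure. Left cancellation makes `t ↦ s t` injective, so translating `A` by `s`
changes `|F ∩ A|` by at most `|∂_{s}(F)|`, and the limit is left-invariant.
-/

open Filter Topology
open scoped Pointwise

section

variable {S : Type*}

section Expansion

variable [DecidableEq S]

def Expands [Mul S] (T : Finset S) (c : ℝ) : Prop :=
  ∀ F : Finset S, c * F.card ≤ (T * F ∪ F).card

lemma card_finBoundary_le_mul [Mul S] [IsLeftCancelMul S] (K F : Finset S) :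
    (finBoundary K F).card ≤ K.card * ((K * F) \ F).card := by
  calc (finBoundary K F).card ≤ (K.biUnion fun k => F.filter (k * · ∉ F)).card := by
        refine Finset.card_le_card fun s hs => ?_
        simp only [finBoundary, Finset.mem_filter, not_forall] at hs
        obtain ⟨hsF, k, hk, hks⟩ := hs
        exact Finset.mem_biUnion.2 ⟨k, hk, Finset.mem_filter.2 ⟨hsF, hks⟩⟩
    _ ≤ K.card * ((K * F) \ F).card := by
        refine Finset.card_biUnion_le_card_mul _ _ _ fun k hk => ?_
        refine Finset.card_le_card_of_injOn (k * ·) (fun s hs => ?_) (mul_right_injective k).injOn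
        simp only [Finset.coe_filter, Set.mem_ofPred_eq] at hs
        exact Finset.mem_sdiff.2 ⟨Finset.mul_mem_mul hk hs.1, hs.2⟩

lemma expands_of_le_card_finBoundary [Mul S] [IsLeftCancelMul S] {K : Finset S} {ε : ℝ}
    (h : ∀ F : Finset S, ε * F.card ≤ (finBoundary K F).card) :
    Expands K (1 + ε / (K.card + 1)) := by
  intro F
  have hunion : (K * F ∪ F).card = F.card + ((K * F) \ F).card := by
    rw [Finset.union_comm, ← Finset.union_sdiff_self_eq_union,
      Finset.card_union_of_disjoint Finset.disjoint_sdiff]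
  have hbd : ε * F.card ≤ K.card * ((K * F) \ F).card :=
    (h F).trans (by exact_mod_cast card_finBoundary_le_mul K F)
  have hK : (0 : ℝ) < K.card + 1 := by positivity
  rw [hunion, Nat.cast_add, add_mul, one_mul, div_mul_eq_mul_div, add_le_add_iff_left,
    div_le_iff₀ hK]
  nlinarith [(Nat.cast_nonneg (α := ℝ) ((K * F) \ F).card)]

lemma Expands.comp [Semigroup S] {K T : Finset S} {a b : ℝ} (hK : Expands K a)
    (hT : Expands T b) (ha : 0 ≤ a) : Expands (K ∪ K * T ∪ T) (a * b) := by
  intro F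
  have hset : (K ∪ K * T ∪ T) * F ∪ F = K * (T * F ∪ F) ∪ (T * F ∪ F) := by
    simp only [Finset.union_mul, Finset.mul_union, mul_assoc]
    ext; simp only [Finset.mem_union]; tauto
  calc a * b * F.card = a * (b * F.card) := mul_assoc _ _ _
    _ ≤ a * (T * F ∪ F).card := by gcongr; exact hT F
    _ ≤ (K * (T * F ∪ F) ∪ (T * F ∪ F)).card := hK _
    _ = ((K ∪ K * T ∪ T) * F ∪ F).card := by rw [hset]

lemma exists_expands_pow [Semigroup S] {K : Finset S} {a : ℝ} (hK : Expands K a) (ha : 0 ≤ a)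
    (n : ℕ) : ∃ T : Finset S, Expands T (a ^ n) := by
  induction n with
  | zero => exact ⟨∅, fun F => by simp⟩
  | succ n ih =>
    obtain ⟨T, hT⟩ := ih
    exact ⟨_, pow_succ' a n ▸ hK.comp hT ha⟩

lemma exists_expands_two_of_le_card_finBoundary [Semigroup S] [IsLeftCancelMul S]
    {K : Finset S} {ε : ℝ} (hε : 0 < ε)
    (h : ∀ F : Finset S, ε * F.card ≤ (finBoundary K F).card) :
    ∃ T : Finset S, Expands T 2 := by
  have hq : 1 < 1 + ε / (K.card + 1) := lt_add_of_pos_right 1 (by positivity)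
  obtain ⟨n, hn⟩ := pow_unbounded_of_one_lt 2 hq
  obtain ⟨T, hT⟩ := exists_expands_pow (expands_of_le_card_finBoundary h) (by positivity) n
  exact ⟨T, fun F => le_trans (by gcongr) (hT F)⟩

lemma Expands.exists_injective_prod_bool [Mul S] {T : Finset S} (hT : Expands T 2) :
    ∃ f : S × Bool → S, Function.Injective f ∧ ∀ x, f x = x.1 ∨ ∃ k ∈ T, f x = k * x.1 := by
  let t : S × Bool → Finset S := fun x => insert x.1 (T.image (· * x.1))
  have hall : ∀ I : Finset (S × Bool), I.card ≤ (I.biUnion t).card := by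
    intro I
    let F := I.image Prod.fst
    have hI : I.card ≤ 2 * F.card := by
      calc I.card ≤ (F ×ˢ (Finset.univ : Finset Bool)).card :=
            Finset.card_le_card fun x hx =>
              Finset.mem_product.2 ⟨Finset.mem_image_of_mem _ hx, Finset.mem_univ _⟩
        _ = 2 * F.card := by simp [mul_comm]
    have hsub : T * F ∪ F ⊆ I.biUnion t := by
      intro y hy
      simp only [Finset.mem_union, Finset.mem_mul, F, Finset.mem_image] at hy
      simp only [Finset.mem_biUnion, t, Finset.mem_insert, Finset.mem_image]
      rcases hy with ⟨k, hk, _, ⟨x, hx, rfl⟩, rfl⟩ | ⟨x, hx, rfl⟩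
      · exact ⟨x, hx, Or.inr ⟨k, hk, rfl⟩⟩
      · exact ⟨x, hx, Or.inl rfl⟩
    have h2 : (2 * F.card : ℝ) ≤ (I.biUnion t).card :=
      (hT F).trans (by exact_mod_cast Finset.card_le_card hsub)
    exact_mod_cast hI.trans (by exact_mod_cast h2)
  obtain ⟨f, hinj, hf⟩ := (Finset.all_card_le_biUnion_card_iff_exists_injective t).1 hall
  refine ⟨f, hinj, fun x => ?_⟩
  simpa [t, eq_comm] using hf x

end Expansion

structure IsInvariantMean [Mul S] (μ : Set S → ℝ) : Prop where
  nonneg : ∀ A, 0 ≤ μ A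
  union : ∀ A B, Disjoint A B → μ (A ∪ B) = μ A + μ B
  univ : μ Set.univ = 1
  preimage_mul : ∀ s A, μ ((s * ·) ⁻¹' A) = μ A

namespace IsInvariantMean

variable [Mul S] {μ : Set S → ℝ}

lemma mono (hμ : IsInvariantMean μ) {A B : Set S} (h : A ⊆ B) : μ A ≤ μ B := by
  have := hμ.union A (B \ A) disjoint_sdiff_self_right
  rw [Set.union_sdiff_cancel h] at this
  linarith [hμ.nonneg (B \ A)]

lemma le_one (hμ : IsInvariantMean μ) (A : Set S) : μ A ≤ 1 :=
  hμ.univ ▸ hμ.mono (Set.subset_univ A)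

lemma image_mul [IsLeftCancelMul S] (hμ : IsInvariantMean μ) (k : S) (A : Set S) :
    μ ((k * ·) '' A) = μ A := by
  rw [← hμ.preimage_mul k, Set.preimage_image_eq A (mul_right_injective k)]

lemma image_eq_of_piecewise_mul [IsLeftCancelMul S] [DecidableEq S]
    (hμ : IsInvariantMean μ) {g : S → S} (hg : Function.Injective g) (T : Finset S) (A : Set S)
    (hgT : ∀ s ∈ A, g s = s ∨ ∃ k ∈ T, g s = k * s) : μ (g '' A) = μ A := by
  induction T using Finset.induction_on generalizing A with
  | empty =>
    simp only [Finset.notMem_empty, false_and, exists_false, or_false] at hgT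
    rw [Set.image_congr hgT, Set.image_id']
  | insert k T _ ih =>
    let A₁ := {s ∈ A | g s = k * s}
    have hA₂ : ∀ s ∈ A \ A₁, g s = s ∨ ∃ k ∈ T, g s = k * s := by
      rintro s ⟨hsA, hs⟩
      have hks : g s ≠ k * s := fun h => hs ⟨hsA, h⟩
      simpa [hks] using hgT s hsA
    have hA : A = A₁ ∪ A \ A₁ := (Set.union_sdiff_cancel (Set.sep_subset _ _)).symm
    calc μ (g '' A) = μ (g '' A₁ ∪ g '' (A \ A₁)) := by rw [← Set.image_union, ← hA]
      _ = μ ((k * ·) '' A₁) + μ (g '' (A \ A₁)) := by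
        rw [hμ.union _ _ ((Set.disjoint_image_iff hg).2 disjoint_sdiff_self_right),
          Set.image_congr fun s hs => hs.2]
      _ = μ (A₁ ∪ A \ A₁) := by
        rw [hμ.image_mul, ih _ hA₂, hμ.union _ _ disjoint_sdiff_self_right]
      _ = μ A := by rw [← hA]

lemma not_expands_two [IsLeftCancelMul S] [DecidableEq S] (hμ : IsInvariantMean μ)
    {T : Finset S} (hT : Expands T 2) : False := by
  obtain ⟨f, hf, hfT⟩ := hT.exists_injective_prod_bool
  have hrange : ∀ b, μ (Set.range fun s => f (s, b)) = 1 := fun b => by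
    rw [← Set.image_univ, hμ.image_eq_of_piecewise_mul (fun s t h => by simpa using hf h) T _
      fun s _ => hfT (s, b), hμ.univ]
  have hdisj : Disjoint (Set.range fun s => f (s, false)) (Set.range fun s => f (s, true)) :=
    Set.disjoint_range_iff.2 fun s t h => by simpa using hf h
  have := hμ.le_one ((Set.range fun s => f (s, false)) ∪ Set.range fun s => f (s, true))
  rw [hμ.union _ _ hdisj, hrange, hrange] at this
  norm_num at this

end IsInvariantMean

lemma leftAmenable_iff_exists_isInvariantMean [Mul S] :
    LeftAmenable S ↔ ∃ μ : Set S → ℝ, IsInvariantMean μ := by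
  constructor
  · rintro ⟨μ, hbd, hadd, huniv, hinv⟩
    exact ⟨μ, fun A => (hbd A).1, hadd, huniv, hinv⟩
  · rintro ⟨μ, hμ⟩
    exact ⟨μ, fun A => ⟨hμ.nonneg A, hμ.le_one A⟩, hμ.union, hμ.univ, hμ.preimage_mul⟩

lemma IsInvariantMean.exists_amenConst_le [Semigroup S] [IsLeftCancelMul S] [DecidableEq S]
    {μ : Set S → ℝ} (hμ : IsInvariantMean μ) (K : Finset S) {ε : ℝ} (hε : 0 < ε) :
    ∃ F : Finset S, F.Nonempty ∧ amenConst F K ≤ ε := by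
  by_contra! h
  have hbd : ∀ F : Finset S, ε * F.card ≤ (finBoundary K F).card := by
    intro F
    rcases F.eq_empty_or_nonempty with rfl | hF
    · simp
    · have := h F hF
      rw [amenConst, lt_div_iff₀ (by exact_mod_cast hF.card_pos)] at this
      linarith
  obtain ⟨T, hT⟩ := exists_expands_two_of_le_card_finBoundary hε hbd
  exact hμ.not_expands_two hT

namespace Finset

noncomputable def density (F : Finset S) (A : Set S) : ℝ :=
  ((F : Set S) ∩ A).ncard / F.card

lemma density_nonneg (F : Finset S) (A : Set S) : 0 ≤ F.density A := by
  unfold density; positivity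

lemma density_le_one (F : Finset S) (A : Set S) : F.density A ≤ 1 := by
  unfold density
  refine div_le_one_of_le₀ ?_ (Nat.cast_nonneg _)
  rw [← Set.ncard_coe_finset]
  exact_mod_cast Set.ncard_le_ncard Set.inter_subset_left F.finite_toSet

lemma density_union (F : Finset S) {A B : Set S} (hAB : Disjoint A B) :
    F.density (A ∪ B) = F.density A + F.density B := by
  unfold density
  rw [Set.inter_union_distrib_left, Set.ncard_union_eq
    (hAB.mono Set.inter_subset_right Set.inter_subset_right)
    (F.finite_toSet.inter_of_left A) (F.finite_toSet.inter_of_left B), Nat.cast_add, add_div]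

lemma density_univ {F : Finset S} (hF : F.Nonempty) : F.density Set.univ = 1 := by
  unfold density
  rw [Set.inter_univ, Set.ncard_coe_finset]
  exact div_self (by exact_mod_cast hF.card_pos.ne')

lemma ncard_inter_eq_card_filter (F : Finset S) (A : Set S) [DecidablePred (· ∈ A)] :
    ((F : Set S) ∩ A).ncard = (F.filter (· ∈ A)).card := by
  rw [← Set.ncard_coe_finset, Finset.coe_filter]
  rfl

end Finset

section Translation

variable [Mul S] [DecidableEq S]

lemma abs_card_filter_preimage_mul_sub_le [IsLeftCancelMul S] (s : S) (A : Set S)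
    [DecidablePred (· ∈ A)] (F : Finset S) :
    |((F.filter (s * · ∈ A)).card : ℝ) - (F.filter (· ∈ A)).card|
      ≤ (finBoundary {s} F).card := by
  -- Both counts lie between `c = |I ∩ s⁻¹A| = |sI ∩ A|` and `c + |∂_{s}(F)|`.
  let I := F.filter (s * · ∈ F)
  let c := (I.filter (s * · ∈ A)).card
  have hI : I.card + (finBoundary {s} F).card = F.card := by
    simpa [finBoundary] using Finset.card_filter_add_card_filter_not (s := F) (s * · ∈ F)
  have hsI : I.image (s * ·) ⊆ F := by
    intro u hu
    obtain ⟨t, ht, rfl⟩ := Finset.mem_image.1 hu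
    exact (Finset.mem_filter.1 ht).2
  have hcI : (I.image (s * ·)).card = I.card :=
    Finset.card_image_of_injective _ (mul_right_injective s)
  have hX₁ : c ≤ (F.filter (s * · ∈ A)).card :=
    Finset.card_le_card (Finset.filter_subset_filter _ (Finset.filter_subset _ _))
  have hX₂ : (F.filter (s * · ∈ A)).card ≤ c + (finBoundary {s} F).card := by
    refine (Finset.card_le_card fun t ht => ?_).trans (Finset.card_union_le _ _)
    simp only [Finset.mem_filter] at ht
    by_cases hst : s * t ∈ F
    · exact Finset.mem_union_left _ (by simp [I, ht, hst])
    · exact Finset.mem_union_right _ (by simp [finBoundary, ht.1, hst])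
  have hY₁ : c ≤ (F.filter (· ∈ A)).card := by
    refine Finset.card_le_card_of_injOn (s * ·) (fun t ht => ?_) (mul_right_injective s).injOn
    simp only [Finset.mem_coe, Finset.mem_filter, I] at ht ⊢
    exact ⟨ht.1.2, ht.2⟩
  have hY₂ : (F.filter (· ∈ A)).card ≤ c + (finBoundary {s} F).card := by
    have hsub :
        F.filter (· ∈ A) ⊆ (I.filter (s * · ∈ A)).image (s * ·) ∪ F \ I.image (s * ·) := by
      intro u hu
      rw [Finset.mem_filter] at hu
      by_cases h : u ∈ I.image (s * ·)
      · obtain ⟨t, ht, rfl⟩ := Finset.mem_image.1 h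
        exact Finset.mem_union_left _
          (Finset.mem_image_of_mem _ (Finset.mem_filter.2 ⟨ht, hu.2⟩))
      · exact Finset.mem_union_right _ (Finset.mem_sdiff.2 ⟨hu.1, h⟩)
    have := (Finset.card_le_card hsub).trans (Finset.card_union_le _ _)
    rw [Finset.card_image_of_injective _ (mul_right_injective s),
      Finset.card_sdiff_of_subset hsI, hcI] at this
    omega
  rify at hX₁ hX₂ hY₁ hY₂
  rw [abs_sub_le_iff]
  constructor <;> linarith

lemma abs_density_preimage_mul_sub_le [IsLeftCancelMul S] (F : Finset S) (s : S) (A : Set S) :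
    |F.density ((s * ·) ⁻¹' A) - F.density A| ≤ amenConst F {s} := by
  classical
  unfold Finset.density amenConst
  rw [Finset.ncard_inter_eq_card_filter, Finset.ncard_inter_eq_card_filter, ← sub_div, abs_div,
    Nat.abs_cast]
  gcongr
  exact abs_card_filter_preimage_mul_sub_le s A F

end Translation

lemma Ultrafilter.exists_tendsto_of_mem_Icc {α : Type*} (U : Ultrafilter α) {f : α → ℝ}
    {a b : ℝ} (hf : ∀ x, f x ∈ Set.Icc a b) : ∃ y, Tendsto f U (𝓝 y) := by
  obtain ⟨y, -, hy⟩ := isCompact_Icc.ultrafilter_le_nhds (U.map f)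
    (le_principal_iff.2 (Ultrafilter.mem_map.2 (univ_mem' hf)))
  exact ⟨y, hy⟩

section Construction

variable [Mul S] [DecidableEq S]

lemma amenConst_mono {K K' : Finset S} (h : K ⊆ K') (F : Finset S) :
    amenConst F K ≤ amenConst F K' := by
  unfold amenConst finBoundary
  gcongr

lemma exists_ultrafilter_eventually_amenConst_le
    (h : ∀ (K : Finset S) (ε : ℝ), 0 < ε → ∃ F : Finset S, F.Nonempty ∧ amenConst F K ≤ ε) :
    ∃ U : Ultrafilter (Finset S), ∀ (K : Finset S) (ε : ℝ), 0 < ε →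
      ∀ᶠ F in (U : Filter (Finset S)), F.Nonempty ∧ amenConst F K ≤ ε := by
  choose φ hφne hφ using fun p : Finset S × ℕ => h p.1 (1 / (p.2 + 1)) (by positivity)
  refine ⟨Ultrafilter.of (map φ atTop), fun K ε hε => ?_⟩
  obtain ⟨N, hN⟩ := exists_nat_one_div_lt hε
  refine Eventually.filter_mono (Ultrafilter.of_le _) (eventually_map.2 ?_)
  refine eventually_atTop.2 ⟨(K, N), fun p hp => ⟨hφne p, ?_⟩⟩
  calc amenConst (φ p) K ≤ amenConst (φ p) p.1 := amenConst_mono hp.1 _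
    _ ≤ 1 / (p.2 + 1) := hφ p
    _ ≤ 1 / (N + 1) := by gcongr; exact_mod_cast hp.2
    _ ≤ ε := hN.le

lemma isInvariantMean_limUnder_density [IsLeftCancelMul S] (U : Ultrafilter (Finset S))
    (hU : ∀ (K : Finset S) (ε : ℝ), 0 < ε →
      ∀ᶠ F in (U : Filter (Finset S)), F.Nonempty ∧ amenConst F K ≤ ε) :
    IsInvariantMean fun A => limUnder (U : Filter (Finset S)) (Finset.density · A) := by
  have hlim : ∀ A, Tendsto (Finset.density · A) U
      (𝓝 (limUnder (U : Filter (Finset S)) (Finset.density · A))) :=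
    fun A => tendsto_nhds_limUnder (U.exists_tendsto_of_mem_Icc (a := 0) (b := 1) fun F =>
      ⟨F.density_nonneg A, F.density_le_one A⟩)
  refine ⟨fun A => ge_of_tendsto' (hlim A) fun F => F.density_nonneg A,
    fun A B hAB => ?_, ?_, ?_⟩
  · exact tendsto_nhds_unique (hlim (A ∪ B))
      (((hlim A).add (hlim B)).congr fun F => (F.density_union hAB).symm)
  · refine tendsto_nhds_unique (hlim Set.univ) (tendsto_const_nhds.congr' ?_)
    filter_upwards [hU ∅ 1 one_pos] with F hF
    exact (Finset.density_univ hF.1).symm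
  · intro s A
    have hzero :
        Tendsto (fun F : Finset S => F.density ((s * ·) ⁻¹' A) - F.density A) U (𝓝 0) := by
      refine Metric.tendsto_nhds.2 fun δ hδ => ?_
      filter_upwards [hU {s} (δ / 2) (by positivity)] with F hF
      rw [Real.dist_eq, sub_zero]
      linarith [abs_density_preimage_mul_sub_le F s A]
    exact sub_eq_zero.1 (tendsto_nhds_unique ((hlim _).sub (hlim A)) hzero)

end Construction

end

/-- Proposition 2.3: a left-cancellative semigroup `S` is left-amenable if and only if,
for every finite `K ⊆ S` and every `ε > 0`, there is a nonempty finite `F ⊆ S`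
with `α(F, K) ≤ ε`. -/
theorem leftAmenable_iff_amenConst {S : Type*} [Semigroup S] [IsLeftCancelMul S]
    [DecidableEq S] :
    LeftAmenable S ↔
      ∀ (K : Finset S) (ε : ℝ), 0 < ε →
        ∃ F : Finset S, F.Nonempty ∧ amenConst F K ≤ ε := by
  rw [leftAmenable_iff_exists_isInvariantMean]
  constructor
  · rintro ⟨μ, hμ⟩ K ε hε
    exact hμ.exists_amenConst_le K hε
  · intro h
    obtain ⟨U, hU⟩ := exists_ultrafilter_eventually_amenConst_le h
    exact ⟨_, isInvariantMean_limUnder_density U hU⟩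
end

section
/- Let S be a left-cancellative semigroup and let (F_i)_{i∈I} be a net of nonempty finite subsets of S indexed by a nonempty directed set I. Then the following conditions are equivalent: (a) (F_i)_{i∈I} is a left-Følner net for S, i.e. lim_i |sF_i \ F_i|/|F_i| = 0 for every s ∈ S; (b) for each finite subset K of S, lim_i α(F_i, K) = 0. -/
open Filter

/-! The `K`-boundary is the union of the `{k}`-boundaries for `k ∈ K`, so `α(A, K)` is at most
`∑ k ∈ K, α(A, {k})`; and by left cancellation `t ↦ s t` maps the `{s}`-boundary of `A`
bijectively onto `sA \ A`, so `α(A, {s}) = |sA \ A| / |A|`. Both conditions therefore say that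
`α(F_i, {s}) → 0` for every `s`. -/

section

variable {S : Type*} [Mul S] [DecidableEq S]

theorem finBoundary_singleton (s : S) (A : Finset S) :
    finBoundary {s} A = A.filter fun t => s * t ∉ A := by
  simp [finBoundary]

theorem finBoundary_eq_biUnion (K A : Finset S) :
    finBoundary K A = K.biUnion fun k => finBoundary {k} A := by
  ext t
  simp only [finBoundary, Finset.mem_filter, Finset.mem_biUnion, Finset.mem_singleton]
  grind

theorem amenConst_nonneg (A K : Finset S) : 0 ≤ amenConst A K := by
  unfold amenConst
  positivity

theorem amenConst_le_sum_singleton (A K : Finset S) :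
    amenConst A K ≤ ∑ k ∈ K, amenConst A {k} := by
  unfold amenConst
  rw [← Finset.sum_div, finBoundary_eq_biUnion]
  gcongr
  exact_mod_cast Finset.card_biUnion_le

theorem tendsto_amenConst_iff_forall_singleton {ι : Type*} (l : Filter ι) (F : ι → Finset S) :
    (∀ K : Finset S, Tendsto (fun i => amenConst (F i) K) l (nhds 0)) ↔
      ∀ s : S, Tendsto (fun i => amenConst (F i) {s}) l (nhds 0) := by
  refine ⟨fun h s => h {s}, fun h K => ?_⟩
  have hsum := tendsto_finsetSum K fun k _ => h k
  rw [Finset.sum_const_zero] at hsum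
  exact tendsto_of_tendsto_of_tendsto_of_le_of_le tendsto_const_nhds hsum
    (fun i => amenConst_nonneg _ _) (fun i => amenConst_le_sum_singleton _ _)

theorem amenConst_singleton [IsLeftCancelMul S] (s : S) (A : Finset S) :
    amenConst A {s} = ((A.image (s * ·) \ A).card : ℝ) / (A.card : ℝ) := by
  rw [amenConst, finBoundary_singleton, Finset.sdiff_eq_filter, Finset.filter_image,
    Finset.card_image_of_injective _ (mul_right_injective s)]

end

theorem folnerNet_iff_amenConst_tendsto_general {S : Type*} [Semigroup S] [IsLeftCancelMul S]
    [DecidableEq S] {I : Type*} [Preorder I]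
    (F : I → Finset S) :
    (∀ s : S,
        Tendsto (fun i => ((((F i).image (s * ·)) \ F i).card : ℝ) / ((F i).card : ℝ))
          atTop (nhds 0)) ↔
      ∀ K : Finset S, Tendsto (fun i => amenConst (F i) K) atTop (nhds 0) := by
  simp_rw [← amenConst_singleton]
  exact (tendsto_amenConst_iff_forall_singleton atTop F).symm

/-- Proposition 2.4: for a left-cancellative semigroup `S` and a net `(F_i)_{i ∈ I}` of
nonempty finite subsets of `S` indexed by a nonempty directed set `I`, the net is a
left-Følner net (i.e. `|s F_i \ F_i| / |F_i| → 0` for all `s ∈ S`) if and only if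
`α(F_i, K) → 0` for every finite subset `K` of `S`. -/
theorem folnerNet_iff_amenConst_tendsto {S : Type*} [Semigroup S] [IsLeftCancelMul S]
    [DecidableEq S] {I : Type*} [Preorder I] [Nonempty I] [IsDirected I (· ≤ ·)]
    (F : I → Finset S) (hF : ∀ i, (F i).Nonempty) :
    (∀ s : S,
        Tendsto (fun i => ((((F i).image (s * ·)) \ F i).card : ℝ) / ((F i).card : ℝ))
          atTop (nhds 0)) ↔
      ∀ K : Finset S, Tendsto (fun i => amenConst (F i) K) atTop (nhds 0) :=
  folnerNet_iff_amenConst_tendsto_general F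
end

section
/- Let S be a semigroup and let K, A, and Ω be finite subsets of S such that every element of K is left-cancellable and ∅ ≠ A ⊆ Ω. Let ε > 0 be a real number such that |Ω \ A| ≥ ε|Ω|. Then α(Ω \ A, K) ≤ (α(Ω, K) + |K| · α(A, K)) / ε. -/
/-!
A point of `Ω \ A` lies in `∂_K(Ω \ A)` either because it lies in `∂_K(Ω)`, or because some
`k ∈ K` moves it into `A`. Since `L_k` is injective, `|A \ kA| = |kA \ A|`, so for each `k`
the points of the second kind are no more than the points of `A` that `k` moves out of `A`,
which all lie in `∂_K(A)`. Hence `|∂_K(Ω \ A)| ≤ |∂_K(Ω)| + |K| |∂_K(A)|`; dividing by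
`|Ω \ A| ≥ ε |Ω|` and using `|A| ≤ |Ω|` gives the bound.
-/

open Finset

section FinBoundary

variable {S : Type*} [Mul S] [DecidableEq S]

lemma finBoundary_sdiff_subset (K A Ω : Finset S) :
    finBoundary K (Ω \ A) ⊆
      finBoundary K Ω ∪ K.biUnion fun k => (Ω \ A).filter fun s => k * s ∈ A := by
  intro s hs
  simp only [finBoundary, mem_filter, mem_sdiff, not_forall] at hs
  obtain ⟨⟨hsΩ, hsA⟩, k, hk, hks⟩ := hs
  by_cases hksA : k * s ∈ A
  · exact mem_union_right _ (mem_biUnion.2 ⟨k, hk, mem_filter.2 ⟨mem_sdiff.2 ⟨hsΩ, hsA⟩, hksA⟩⟩)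
  · refine mem_union_left _ (mem_filter.2 ⟨hsΩ, fun h => ?_⟩)
    exact hks ⟨h k hk, hksA⟩

lemma card_sdiff_filter_mul_mem_le {k : S} (hk : Function.Injective (k * ·)) (A Ω : Finset S) :
    ((Ω \ A).filter fun s => k * s ∈ A).card ≤ (A.filter fun a => k * a ∉ A).card := by
  have hmaps : ((Ω \ A).filter fun s => k * s ∈ A).image (k * ·) ⊆ A \ A.image (k * ·) := by
    intro x hx
    obtain ⟨s, hs, rfl⟩ := mem_image.1 hx
    simp only [mem_filter, mem_sdiff] at hs
    exact mem_sdiff.2 ⟨hs.2, fun hkA => hs.1.2 (hk.mem_finset_image.1 hkA)⟩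
  have hout : A.image (k * ·) \ A = (A.filter fun a => k * a ∉ A).image (k * ·) := by
    rw [sdiff_eq_filter, filter_image]
  calc ((Ω \ A).filter fun s => k * s ∈ A).card
      = (((Ω \ A).filter fun s => k * s ∈ A).image (k * ·)).card :=
        (card_image_of_injective _ hk).symm
    _ ≤ (A \ A.image (k * ·)).card := card_le_card hmaps
    _ = (A.image (k * ·) \ A).card := card_sdiff_comm (card_image_of_injective _ hk).symm
    _ ≤ (A.filter fun a => k * a ∉ A).card := hout ▸ card_image_le

lemma filter_mul_notMem_subset_finBoundary {K : Finset S} {k : S} (hk : k ∈ K) (A : Finset S) :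
    (A.filter fun a => k * a ∉ A) ⊆ finBoundary K A :=
  monotone_filter_right A fun _ _ hka hKa => hka (hKa k hk)

lemma card_finBoundary_sdiff_le {K : Finset S} (hK : ∀ k ∈ K, Function.Injective (k * ·))
    (A Ω : Finset S) :
    (finBoundary K (Ω \ A)).card ≤ (finBoundary K Ω).card + K.card * (finBoundary K A).card := by
  refine (card_le_card (finBoundary_sdiff_subset K A Ω)).trans <| (card_union_le _ _).trans ?_
  gcongr
  refine card_biUnion_le_card_mul K _ _ fun k hk => ?_
  exact (card_sdiff_filter_mul_mem_le (hK k hk) A Ω).trans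
    (card_le_card (filter_mul_notMem_subset_finBoundary hk A))

end FinBoundary

/-- Lemma 3.4: if every element of `K` is left-cancellable, `∅ ≠ A ⊆ Ω` are finite subsets
of the semigroup `S`, and `|Ω \ A| ≥ ε |Ω|` for some real `ε > 0`, then
`α(Ω \ A, K) ≤ (α(Ω, K) + |K| α(A, K)) / ε`. -/
theorem amenConst_sdiff_le {S : Type*} [Semigroup S] [DecidableEq S]
    (K A Ω : Finset S) (hK : ∀ k ∈ K, Function.Injective (k * ·))
    (hA : A.Nonempty) (hAΩ : A ⊆ Ω)
    (ε : ℝ) (hε : 0 < ε) (hcard : ε * (Ω.card : ℝ) ≤ ((Ω \ A).card : ℝ)) :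
    amenConst (Ω \ A) K ≤ (amenConst Ω K + (K.card : ℝ) * amenConst A K) / ε := by
  have hA_pos : (0 : ℝ) < A.card := by exact_mod_cast hA.card_pos
  have hA_le : (A.card : ℝ) ≤ Ω.card := by exact_mod_cast card_le_card hAΩ
  have hΩ_pos : 0 < ε * Ω.card := mul_pos hε (hA_pos.trans_le hA_le)
  have hcount : ((finBoundary K (Ω \ A)).card : ℝ) ≤
      (finBoundary K Ω).card + (K.card : ℝ) * (finBoundary K A).card := by
    exact_mod_cast card_finBoundary_sdiff_le hK A Ω
  calc amenConst (Ω \ A) K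
      ≤ ((finBoundary K Ω).card + (K.card : ℝ) * (finBoundary K A).card) / (ε * Ω.card) :=
        div_le_div₀ (by positivity) hcount hΩ_pos hcard
    _ = ((finBoundary K Ω).card / Ω.card + K.card * ((finBoundary K A).card / Ω.card)) / ε := by
        field_simp
    _ ≤ (amenConst Ω K + (K.card : ℝ) * amenConst A K) / ε := by
        unfold amenConst
        gcongr
end

section
/- (Filling lemma) Let S be a cancellative semigroup and let Ω and K be nonempty finite subsets of S. Then, for every real number ε with 0 < ε ≤ 1, there exists an (ε, K)-filling pattern P for Ω such that |KP| ≥ ε(1 − α(Ω, K))|Ω|, where KP = ⋃_{s∈P} Ks. -/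
/-- A family `(A j)_{j ∈ J}` of finite subsets of `X` is `ε`-disjoint if there is a family
`(B j)_{j ∈ J}` of pairwise disjoint subsets of `X` with `B j ⊆ A j` and
`|B j| ≥ (1 - ε) |A j|` for all `j`. -/
def EpsDisjoint {X : Type*} (ε : ℝ) {J : Type*} (A : J → Finset X) : Prop :=
  ∃ B : J → Finset X,
    Pairwise (fun i j => Disjoint (B i) (B j)) ∧
    ∀ j, B j ⊆ A j ∧ (1 - ε) * ((A j).card : ℝ) ≤ ((B j).card : ℝ)

/-- The right `K`-interior of a finite subset `Ω` of a semigroup: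
`int_K(Ω) = {s ∈ Ω : Ks ⊆ Ω}`. -/
def finInterior {S : Type*} [Mul S] [DecidableEq S] (K Ω : Finset S) : Finset S :=
  Ω.filter fun s => ∀ k ∈ K, k * s ∈ Ω

/-- A finite subset `P ⊆ S` is an `(ε, K)`-filling pattern for `Ω` if `P ⊆ int_K(Ω)` and
the family `(Ks)_{s ∈ P}` is `ε`-disjoint. -/
def IsFillingPattern {S : Type*} [Mul S] [DecidableEq S]
    (ε : ℝ) (K Ω P : Finset S) : Prop :=
  P ⊆ finInterior K Ω ∧ EpsDisjoint ε (fun s : { x // x ∈ P } => K.image (· * s.val))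

/-!
Choose greedily a family `P ⊆ int_K(Ω)` of translates `Ks`, adding `s` (with the part of `Ks`
not yet covered as its disjoint piece) whenever less than an `ε`-fraction of `Ks` is covered.
At the end every `s ∈ int_K(Ω)` has `|Ks ∩ KP| ≥ ε|K|`. By cancellativity every point lies in at
most `|K|` translates `Ks`, so summing over `s` gives `ε|K| |int_K(Ω)| ≤ |K| |KP|`, and
`|int_K(Ω)| = (1 - α(Ω, K)) |Ω|`.
-/

open Finset

section EpsDisjointOn

variable {ι X : Type*} (ε : ℝ) (A : ι → Finset X)

def EpsDisjointOn (P : Finset ι) : Prop :=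
  ∃ B : ι → Finset X, (P : Set ι).PairwiseDisjoint B ∧
    ∀ i ∈ P, B i ⊆ A i ∧ (1 - ε) * (#(A i) : ℝ) ≤ #(B i)

variable {ε A}

theorem EpsDisjointOn.epsDisjoint {P : Finset ι} (h : EpsDisjointOn ε A P) :
    EpsDisjoint ε (fun i : P => A i) := by
  obtain ⟨B, hdisj, hB⟩ := h
  exact ⟨fun i => B i, fun i j hij => hdisj i.2 j.2 (Subtype.coe_injective.ne hij),
    fun i => hB i i.2⟩

theorem epsDisjointOn_empty : EpsDisjointOn ε A ∅ :=
  ⟨fun _ => ∅, by simp, by simp⟩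

variable [DecidableEq ι] [DecidableEq X]

theorem EpsDisjointOn.insert {P : Finset ι} {s : ι} (h : EpsDisjointOn ε A P) (hs : s ∉ P)
    (hcovered : (#(A s ∩ P.biUnion A) : ℝ) ≤ ε * #(A s)) :
    EpsDisjointOn ε A (insert s P) := by
  obtain ⟨B, hdisj, hB⟩ := h
  have hne : ∀ i ∈ P, i ≠ s := fun i hi => ne_of_mem_of_not_mem hi hs
  refine ⟨Function.update B s (A s \ P.biUnion A), ?_, ?_⟩
  · rw [coe_insert]
    refine (hdisj.mono_on fun i hi => ?_).insert_of_notMem hs fun j hj => ?_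
    · rw [Function.update_of_ne (hne i hi)]
    · rw [Function.update_self, Function.update_of_ne (hne j hj)]
      exact disjoint_sdiff_self_left.mono_right ((hB j hj).1.trans (subset_biUnion_of_mem A hj))
  · intro i hi
    rcases mem_insert.1 hi with rfl | hi
    · have hsplit := card_sdiff_add_card_inter (A i) (P.biUnion A)
      rw [Function.update_self]
      refine ⟨sdiff_subset, ?_⟩
      have : ((#(A i \ P.biUnion A) : ℕ) : ℝ) + #(A i ∩ P.biUnion A) = #(A i) := by
        exact_mod_cast hsplit
      linarith
    · rw [Function.update_of_ne (hne i hi)]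
      exact hB i hi

theorem exists_epsDisjointOn_forall_le_card_inter (hε : ε ≤ 1) (T : Finset ι) :
    ∃ P ⊆ T, EpsDisjointOn ε A P ∧
      ∀ s ∈ T, ε * (#(A s) : ℝ) ≤ #(A s ∩ P.biUnion A) := by
  induction T using Finset.induction_on with
  | empty => exact ⟨∅, subset_refl _, epsDisjointOn_empty, by simp⟩
  | insert s T hsT ih =>
    obtain ⟨P, hPT, hP, hcover⟩ := ih
    by_cases hs : ε * (#(A s) : ℝ) ≤ #(A s ∩ P.biUnion A)
    · exact ⟨P, hPT.trans (subset_insert s T), hP, (forall_mem_insert _ _ _).2 ⟨hs, hcover⟩⟩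
    · refine ⟨insert s P, insert_subset_insert s hPT,
        hP.insert (fun h => hsT (hPT h)) (not_le.1 hs).le, (forall_mem_insert _ _ _).2 ⟨?_, ?_⟩⟩
      · rw [inter_eq_left.2 (subset_biUnion_of_mem A (mem_insert_self s P))]
        exact mul_le_of_le_one_left (Nat.cast_nonneg _) hε
      · intro t ht
        exact (hcover t ht).trans <| Nat.cast_le.2 <| card_le_card <|
          inter_subset_inter_left <| biUnion_subset_biUnion_of_subset_left A (subset_insert s P)

end EpsDisjointOn

theorem one_sub_amenConst_mul_card {S : Type*} [Mul S] [DecidableEq S] (K Ω : Finset S) :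
    (1 - amenConst Ω K) * #Ω = #(finInterior K Ω) := by
  have hsplit : #(finInterior K Ω) + #(finBoundary K Ω) = #Ω :=
    card_filter_add_card_filter_not _
  rcases eq_or_ne #Ω 0 with hΩ | hΩ
  · have hint : #(finInterior K Ω) = 0 := by omega
    simp [hΩ, hint]
  · rw [amenConst, sub_mul, div_mul_cancel₀ _ (Nat.cast_ne_zero.2 hΩ), one_mul, ← hsplit]
    push_cast
    ring

theorem card_image_mul_right {S : Type*} [Mul S] [IsRightCancelMul S] [DecidableEq S]
    (K : Finset S) (s : S) : #(K.image (· * s)) = #K :=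
  card_image_of_injective K (mul_left_injective s)

/-- `ks = x` determines `s` once `k` is fixed, so each `x` lies in at most `|K|` translates `Ks`. -/
theorem sum_card_image_mul_right_inter_le {S : Type*} [Mul S] [IsLeftCancelMul S]
    [DecidableEq S] (K T U : Finset S) :
    ∑ s ∈ T, #(K.image (· * s) ∩ U) ≤ #K * #U :=
  calc ∑ s ∈ T, #(K.image (· * s) ∩ U)
      ≤ ∑ s ∈ T, #{k ∈ K | k * s ∈ U} := by
        refine sum_le_sum fun s _ => ?_
        rw [← filter_mem_eq_inter, filter_image]
        exact card_image_le
    _ = ∑ k ∈ K, #{s ∈ T | k * s ∈ U} := by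
        simp only [card_filter]; exact sum_comm
    _ ≤ ∑ k ∈ K, #U := sum_le_sum fun k _ =>
        card_le_card_of_injOn (k * ·) (fun s hs => (mem_filter.1 hs).2)
          (mul_right_injective k).injOn
    _ = #K * #U := by rw [sum_const, smul_eq_mul]

theorem filling_lemma_general {S : Type*} [Semigroup S] [IsCancelMul S] [DecidableEq S]
    (Ω K : Finset S) (hK : K.Nonempty)
    (ε : ℝ) (hε₁ : ε ≤ 1) :
    ∃ P : Finset S, IsFillingPattern ε K Ω P ∧
      ε * (1 - amenConst Ω K) * (Ω.card : ℝ) ≤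
        ((P.biUnion (fun s => K.image (· * s))).card : ℝ) := by
  obtain ⟨P, hPint, hP, hcover⟩ := exists_epsDisjointOn_forall_le_card_inter
    (A := fun s => K.image (· * s)) hε₁ (finInterior K Ω)
  refine ⟨P, ⟨hPint, hP.epsDisjoint⟩, ?_⟩
  set KP := P.biUnion fun s => K.image (· * s)
  have hKpos : (0 : ℝ) < #K := Nat.cast_pos.2 hK.card_pos
  have hcount : (#K : ℝ) * (ε * #(finInterior K Ω)) ≤ #K * #KP :=
    calc (#K : ℝ) * (ε * #(finInterior K Ω))
        = ∑ s ∈ finInterior K Ω, ε * (#(K.image (· * s)) : ℝ) := by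
          simp only [card_image_mul_right, sum_const, nsmul_eq_mul]; ring
      _ ≤ ∑ s ∈ finInterior K Ω, (#(K.image (· * s) ∩ KP) : ℝ) := sum_le_sum hcover
      _ ≤ #K * #KP := by
          exact_mod_cast sum_card_image_mul_right_inter_le K (finInterior K Ω) KP
  rw [mul_assoc, one_sub_amenConst_mul_card]
  exact le_of_mul_le_mul_left hcount hKpos

/-- Lemma 3.7 (Filling lemma): if `S` is a cancellative semigroup, `Ω` and `K` are nonempty
finite subsets of `S`, and `0 < ε ≤ 1`, then there exists an `(ε, K)`-filling pattern `P`
for `Ω` with `|KP| ≥ ε (1 - α(Ω, K)) |Ω|`, where `KP = ⋃_{s ∈ P} Ks`. -/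
theorem filling_lemma {S : Type*} [Semigroup S] [IsCancelMul S] [DecidableEq S]
    (Ω K : Finset S) (hΩ : Ω.Nonempty) (hK : K.Nonempty)
    (ε : ℝ) (hε₀ : 0 < ε) (hε₁ : ε ≤ 1) :
    ∃ P : Finset S, IsFillingPattern ε K Ω P ∧
      ε * (1 - amenConst Ω K) * (Ω.card : ℝ) ≤
        ((P.biUnion (fun s => K.image (· * s))).card : ℝ) :=
  filling_lemma_general Ω K hK ε hε₁
end
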